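/- arXiv:2002.00841 — 2 statements merged into one kernel-verified Lean document; each statement's English description precedes it below -/
import Mathlib

section
/- Let E be a real inner product space, let A and B be finite index sets, and let u : A → E and v : B → E be families of vectors. Then Σ_{a∈A} Σ_{b∈B} ‖u(a) − v(b)‖² − ‖Σ_{a∈A} u(a) − Σ_{b∈B} v(b)‖² = (|B|·Σ_{a∈A} ‖u(a)‖² − ‖Σ_{a∈A} u(a)‖²) + (|A|·Σ_{b∈B} ‖v(b)‖² − ‖Σ_{b∈B} v(b)‖²). -/
/-!
Expanding `‖x - y‖² = ‖x‖² + ‖y‖² - 2⟪x, y⟫` in every pairwise term, the cross terms add up to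
`-2⟪Σ u, Σ v⟫`, which is exactly the cross term of `‖Σ u - Σ v‖²`; so it cancels in the
difference and only the two "variance-like" terms remain.
-/

open Finset

open scoped RealInnerProductSpace

theorem sum_sum_norm_sub_sq {E : Type*} [NormedAddCommGroup E] [InnerProductSpace ℝ E]
    {α β : Type*} (A : Finset α) (B : Finset β) (u : α → E) (v : β → E) :
    ∑ a ∈ A, ∑ b ∈ B, ‖u a - v b‖ ^ 2 =
      (B.card : ℝ) * ∑ a ∈ A, ‖u a‖ ^ 2 + (A.card : ℝ) * ∑ b ∈ B, ‖v b‖ ^ 2 -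
        2 * ⟪∑ a ∈ A, u a, ∑ b ∈ B, v b⟫ := by
  simp_rw [norm_sub_sq_real, sum_add_distrib, sum_sub_distrib, sum_const, nsmul_eq_mul,
    ← mul_sum, ← inner_sum, ← sum_inner]
  ring

/-- The exact expansion comparing pairwise squared distances between two families of
vectors with the squared distance between their sums:
`Σ_{a∈A} Σ_{b∈B} ‖u a - v b‖² - ‖Σ_A u - Σ_B v‖²
  = (|B| Σ_A ‖u a‖² - ‖Σ_A u‖²) + (|A| Σ_B ‖v b‖² - ‖Σ_B v‖²)`. -/
theorem sum_sq_dist_expansion {E : Type*} [NormedAddCommGroup E]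
    [InnerProductSpace ℝ E] {α β : Type*} (A : Finset α) (B : Finset β)
    (u : α → E) (v : β → E) :
    (∑ a ∈ A, ∑ b ∈ B, ‖u a - v b‖ ^ 2) - ‖(∑ a ∈ A, u a) - ∑ b ∈ B, v b‖ ^ 2 =
      ((B.card : ℝ) * ∑ a ∈ A, ‖u a‖ ^ 2 - ‖∑ a ∈ A, u a‖ ^ 2) +
      ((A.card : ℝ) * ∑ b ∈ B, ‖v b‖ ^ 2 - ‖∑ b ∈ B, v b‖ ^ 2) := by
  rw [sum_sum_norm_sub_sq, norm_sub_sq_real]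
  ring
end

section
/- (Theorem 2, label level.) Let W be a vocabulary, E a real inner product space, e : W → E a word embedding, s : W → W → ℝ a semantic-gap function, and ε ≥ 0 a constant such that ‖e(w) − e(w′)‖² ≤ ε·s(w, w′) for all words w, w′ ∈ W. Let two labels be given as families of words l_i : Fin K → W and l_j : Fin K → W with the same number K of words, and define their label embeddings u_{l_i} = Σ_{a < K} e(l_i(a)) and u_{l_j} = Σ_{b < K} e(l_j(b)), and their semantic gap S(l_i, l_j) = Σ_{a < K} Σ_{b < K} s(l_i(a), l_j(b)). Then ‖u_{l_i} − u_{l_j}‖² ≤ ε·S(l_i, l_j). -/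
/-- (Theorem 2, label level.) If a word embedding `e` captures word semantics, i.e.
`‖e w - e w'‖² ≤ ε · s w w'` for all words, then for two labels of `K` words each,
with label embeddings given by summing word embeddings and label semantic gap given
by summing pairwise word gaps, one has `‖u_{l_i} - u_{l_j}‖² ≤ ε · S(l_i, l_j)`. -/
theorem label_embedding_captures_semantics
    {W : Type*} {E : Type*} [NormedAddCommGroup E] [InnerProductSpace ℝ E]
    (e : W → E) (s : W → W → ℝ) (ε : ℝ) (hε : 0 ≤ ε)
    (hsem : ∀ w w' : W, ‖e w - e w'‖ ^ 2 ≤ ε * s w w')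
    (K : ℕ) (li lj : Fin K → W) :
    ‖(∑ a : Fin K, e (li a)) - ∑ b : Fin K, e (lj b)‖ ^ 2 ≤
      ε * ∑ a : Fin K, ∑ b : Fin K, s (li a) (lj b) := by
  rcases Nat.eq_zero_or_pos K with hK | hK
  · subst hK; simp
  set u := (∑ a : Fin K, e (li a)) - ∑ b : Fin K, e (lj b) with hu
  set d : Fin K × Fin K → E := fun p => e (li p.1) - e (lj p.2) with hd
  have key : (K : ℝ) • u = ∑ p : Fin K × Fin K, d p := by
    rw [Fintype.sum_prod_type]
    simp only [hd, Finset.sum_sub_distrib, Finset.sum_const, Finset.card_univ,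
      Fintype.card_fin, hu, smul_sub]
    rw [Finset.smul_sum]
    simp [Nat.cast_smul_eq_nsmul]
  have h1 : ‖∑ p : Fin K × Fin K, d p‖ ≤ ∑ p : Fin K × Fin K, ‖d p‖ :=
    norm_sum_le _ _
  have h2 : (∑ p : Fin K × Fin K, ‖d p‖) ^ 2 ≤
      (K * K : ℝ) * ∑ p : Fin K × Fin K, ‖d p‖ ^ 2 := by
    have := sq_sum_le_card_mul_sum_sq (s := (Finset.univ : Finset (Fin K × Fin K)))
      (f := fun p => ‖d p‖)
    simpa using this
  have h3 : ∑ p : Fin K × Fin K, ‖d p‖ ^ 2 ≤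
      ε * ∑ a : Fin K, ∑ b : Fin K, s (li a) (lj b) := by
    rw [Finset.mul_sum, Fintype.sum_prod_type]
    exact Finset.sum_le_sum fun a _ => by
      rw [Finset.mul_sum]
      exact Finset.sum_le_sum fun b _ => hsem _ _
  have hKpos : (0 : ℝ) < K := by exact_mod_cast hK
  have hnorm : (K : ℝ) * ‖u‖ = ‖∑ p : Fin K × Fin K, d p‖ := by
    rw [← key, norm_smul, Real.norm_natCast]
  have h4 : ((K : ℝ) * ‖u‖) ^ 2 ≤ (K * K : ℝ) *
      (ε * ∑ a : Fin K, ∑ b : Fin K, s (li a) (lj b)) := by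
    rw [hnorm]
    calc ‖∑ p : Fin K × Fin K, d p‖ ^ 2
        ≤ (∑ p : Fin K × Fin K, ‖d p‖) ^ 2 := by
          apply pow_le_pow_left₀ (norm_nonneg _) h1
      _ ≤ (K * K : ℝ) * ∑ p : Fin K × Fin K, ‖d p‖ ^ 2 := h2
      _ ≤ _ := by
          apply mul_le_mul_of_nonneg_left h3 (by positivity)
  have h5 : (0:ℝ) < (K:ℝ) * (K:ℝ) := mul_pos hKpos hKpos
  exact le_of_mul_le_mul_left (by nlinarith [h4]) h5
end
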